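/- arXiv:2402.10309 — 2 statements merged into one kernel-verified Lean document; each statement's English description precedes it below -/
import Mathlib

section
/- Suppose the reward is uncorrected, i.e. for every complete trajectory τ = (s_0, …, s_T, s_f): Σ_{t=0}^{T} r(s_t, s_{t+1}) = −E(s_T). If Q and V satisfy the soft Bellman optimality equations, then the terminating state distribution of the associated optimal policy satisfies π*(x) = N(x) · exp(−E(x)/α) / exp(V(s_0)/α) for every terminating state x ∈ X, where N(x) denotes the number of directed paths from s_0 to x in G. In particular, π*(x) is biased by the number of trajectories leading to x. -/
/-- Product of `f` over consecutive pairs of a list: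
for `l = [v₀, …, v_k]`, `pairProd f l = ∏_{t=0}^{k-1} f v_t v_{t+1}`. -/
def pairProd {V : Type*} (f : V → V → ℝ) (l : List V) : ℝ :=
  ((l.zip l.tail).map (fun p => f p.1 p.2)).prod

/-- Sum of `f` over consecutive pairs of a list. -/
def pairSum {V : Type*} (f : V → V → ℝ) (l : List V) : ℝ :=
  ((l.zip l.tail).map (fun p => f p.1 p.2)).sum

/-- `l` is a directed path from `a` to `b` in the graph with edge relation `E`. -/
def IsPath {V : Type*} (E : V → V → Prop) (a b : V) (l : List V) : Prop :=
  l.Chain' E ∧ l.head? = some a ∧ l.getLast? = some b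

lemma pairSum_cons₂ {V : Type*} (f : V → V → ℝ) (a c : V) (t : List V) :
    pairSum f (a :: c :: t) = f a c + pairSum f (c :: t) := by
  simp [pairSum]

lemma pairProd_exp {V : Type*} (g : V → V → ℝ) (l : List V) :
    pairProd (fun s s' => Real.exp (g s s')) l = Real.exp (pairSum g l) := by
  simp [pairProd, pairSum, Real.exp_list_sum, List.map_map, Function.comp_def]

lemma telescope {V : Type*} (E : V → V → Prop) (f r' : V → V → ℝ) (g : V → ℝ)
    (h : ∀ s s', E s s' → f s s' = r' s s' + g s' - g s) :
    ∀ (l : List V) (a b : V), l.Chain' E → l.head? = some a → l.getLast? = some b →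
      pairSum f l = pairSum r' l + g b - g a
  | [], a, b, _, ha, _ => by simp at ha
  | [v], a, b, _, ha, hb => by
      simp at ha hb; subst ha; subst hb; simp [pairSum]
  | v :: c :: t, a, b, hch, ha, hb => by
      simp only [List.head?_cons, Option.some.injEq] at ha
      subst ha
      rw [List.Chain', List.isChain_cons_cons] at hch
      have hb' : (c :: t).getLast? = some b := by
        rwa [List.getLast?_cons_cons] at hb
      rw [pairSum_cons₂, pairSum_cons₂,
        telescope E f r' g h (c :: t) c b hch.2 rfl hb', h _ _ hch.1]
      ring

lemma chain'_transGen {V : Type*} (E : V → V → Prop) (l : List V) (hch : l.Chain' E) :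
    ∀ (j : ℕ) (hj : j < l.length) (i : ℕ) (hi : i < j),
      Relation.TransGen E (l.get ⟨i, hi.trans hj⟩) (l.get ⟨j, hj⟩) := by
  intro j
  induction j with
  | zero => intro _ i hi; exact absurd hi (Nat.not_lt_zero i)
  | succ k ih =>
    intro hj i hi
    have hk : k < l.length := Nat.lt_of_succ_lt hj
    have hstep : E (l.get ⟨k, hk⟩) (l.get ⟨k + 1, hj⟩) :=
      List.isChain_iff_getElem.mp hch k (by omega)
    rcases Nat.lt_or_ge i k with h' | h'
    · exact (ih hk i h').tail hstep
    · have hik : i = k := by omega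
      subst hik
      exact Relation.TransGen.single hstep

lemma chain'_nodup {V : Type*} (E : V → V → Prop)
    (hacyc : ∀ v : V, ¬ Relation.TransGen E v v) (l : List V) (hch : l.Chain' E) :
    l.Nodup := by
  rw [List.Nodup, List.pairwise_iff_get]
  intro i j hij heq
  have := chain'_transGen E l hch j j.isLt i hij
  rw [show l.get ⟨(i:ℕ), _⟩ = l.get i from rfl, show l.get ⟨(j:ℕ), j.isLt⟩ = l.get j from rfl,
    heq] at this
  exact hacyc _ this

/-- With the uncorrected (sparse-return) reward, the terminating state
distribution of the optimal MaxEnt policy is biased by the number `N(x)` of directed paths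
from `s₀` to `x`: `π*(x) = N(x) · exp(-E(x)/α) / exp(V(s₀)/α)`. -/
theorem uncorrected_terminating_distribution_biased
    {V : Type*} [Fintype V] [DecidableEq V]
    (E : V → V → Prop) [DecidableRel E] (s0 sf : V)
    (hacyc : ∀ v : V, ¬ Relation.TransGen E v v)
    (hsink : ∀ v : V, ¬ E sf v)
    (hreach : ∀ v : V, Relation.ReflTransGen E s0 v)
    (hnoin : ∀ v : V, ¬ E v s0)
    (hs0f : s0 ≠ sf)
    (α : ℝ) (hα : 0 < α)
    (En : V → ℝ) (r : V → V → ℝ)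
    -- uncorrected reward: the return of every complete trajectory is `-E(x)`
    (huncorr : ∀ (x : V) (l : List V), E x sf → IsPath E s0 x l →
      pairSum r l + r x sf = -En x)
    (Q : V → V → ℝ) (Vf : V → ℝ)
    (hQ : ∀ s s' : V, E s s' → Q s s' = r s s' + Vf s')
    (hV : ∀ s : V, s ≠ sf →
      Vf s = α * Real.log (∑ t ∈ Finset.univ.filter (fun t => E s t), Real.exp (Q s t / α)))
    (hVsf : Vf sf = 0) :
    ∀ x : V, E x sf →
      (∑ᶠ l ∈ {l : List V | IsPath E s0 x l},
        pairProd (fun s s' => Real.exp ((Q s s' - Vf s) / α)) l *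
          Real.exp ((Q x sf - Vf x) / α))
      = (Nat.card {l : List V // IsPath E s0 x l} : ℝ) *
          Real.exp (-En x / α) / Real.exp (Vf s0 / α) := by
  intro x hx
  -- finiteness of the path set
  have hfin : {l : List V | IsPath E s0 x l}.Finite := by
    apply (List.finite_length_le V (Fintype.card V)).subset
    intro l hl
    have hnd := chain'_nodup E hacyc l hl.1
    exact hnd.length_le_card
  -- each term is constant
  have hterm : ∀ l ∈ {l : List V | IsPath E s0 x l},
      pairProd (fun s s' => Real.exp ((Q s s' - Vf s) / α)) l *
        Real.exp ((Q x sf - Vf x) / α)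
      = Real.exp (-En x / α) / Real.exp (Vf s0 / α) := by
    intro l hl
    obtain ⟨hch, ha, hb⟩ := hl
    have htel : pairSum (fun s s' => Q s s' - Vf s) l = pairSum r l + Vf x - Vf s0 := by
      refine telescope E _ r Vf (fun s s' hE => ?_) l s0 x hch ha hb
      rw [hQ s s' hE]
    have h1 : pairProd (fun s s' => Real.exp ((Q s s' - Vf s) / α)) l
        = Real.exp (pairSum (fun s s' => (Q s s' - Vf s) / α) l) := pairProd_exp _ l
    have h2 : pairSum (fun s s' => (Q s s' - Vf s) / α) l
        = (pairSum (fun s s' => Q s s' - Vf s) l) / α := by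
      simp [pairSum, div_eq_mul_inv, ← List.sum_map_mul_right]
    have hr : pairSum r l + r x sf = -En x := huncorr x l hx ⟨hch, ha, hb⟩
    rw [h1, h2, htel, ← Real.exp_add, eq_div_iff (Real.exp_ne_zero _), ← Real.exp_add]
    congr 1
    rw [hQ x sf hx, hVsf]
    field_simp
    linarith
  rw [finsum_mem_eq_finite_toFinset_sum _ hfin,
    Finset.sum_congr rfl (fun l hl => hterm l (hfin.mem_toFinset.mp hl)),
    Finset.sum_const, nsmul_eq_mul,
    show (Nat.card { l : List V // IsPath E s0 x l } : ℝ) = (hfin.toFinset.card : ℝ) from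
      congrArg _ (Nat.card_eq_card_finite_toFinset hfin)]
  ring
end

section
/- Let the reward be the forward-looking corrected reward r(s, s') = −E(s → s') + α log P_B(s|s') for edges with s' ∈ S and r(s, s_f) = 0. Let π_b be a probability distribution over the edges s → s' of G with s' ∈ S, and define L_SQL = (1/2) Σ π_b(s, s') Δ_SQL(s, s')² and L_{FL-DB} = (1/2) Σ π_b(s, s') Δ_{FL-DB}(s, s')². Then, under the correspondence F̃(s) = Σ_{s'' ∈ Ch(s)} exp(Q(s, s'')/α) and P_F(s'|s) = exp(Q(s, s')/α)/F̃(s), the Soft Q-Learning objective is proportional to the Forward-Looking Detailed Balance objective: L_SQL = α² L_{FL-DB}. -/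
/-- The flow induced by a soft Q-function:
`F(s) = Σ_{s'' ∈ Ch(s)} exp(Q(s,s'')/α)`. -/
noncomputable def Fq {V : Type*} [Fintype V] (E : V → V → Prop) [DecidableRel E]
    (α : ℝ) (Q : V → V → ℝ) (s : V) : ℝ :=
  ∑ t ∈ Finset.univ.filter (fun t => E s t), Real.exp (Q s t / α)

/-- The policy induced by a soft Q-function:
`P_F(s'|s) = exp(Q(s,s')/α) / F(s)`. -/
noncomputable def PFq {V : Type*} [Fintype V] (E : V → V → Prop) [DecidableRel E]
    (α : ℝ) (Q : V → V → ℝ) (s s' : V) : ℝ :=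
  Real.exp (Q s s' / α) / Fq E α Q s

/-- The soft value function induced by a soft Q-function:
`V_Q(s) = α log Σ_{s'' ∈ Ch(s)} exp(Q(s,s'')/α)` for `s ∈ S`, and `V_Q(s_f) = 0`. -/
noncomputable def VQ {V : Type*} [Fintype V] [DecidableEq V]
    (E : V → V → Prop) [DecidableRel E] (sf : V) (α : ℝ) (Q : V → V → ℝ) (s : V) : ℝ :=
  if s = sf then 0 else α * Real.log (Fq E α Q s)

/-- The Forward-Looking Detailed Balance residual of an edge `s → s'` with `s' ∈ S`, under
the correspondence `F̃ = Fq`, `P_F = PFq`: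
`Δ_{FL-DB}(s,s') = log(F̃(s') P_B(s|s')) - log(F̃(s) P_F(s'|s)) - E(s → s')/α`. -/
noncomputable def deltaFLDB {V : Type*} [Fintype V]
    (E : V → V → Prop) [DecidableRel E] (α : ℝ)
    (Ee : V → V → ℝ) (PB : V → V → ℝ) (Q : V → V → ℝ) (s s' : V) : ℝ :=
  Real.log (Fq E α Q s' * PB s s') - Real.log (Fq E α Q s * PFq E α Q s s') - Ee s s' / α

/-!
Under `F̃(s) P_F(s'|s) = exp(Q(s,s')/α)` the FL-DB residual of an edge `s → s'` with `s' ∈ S`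
is `log F̃(s') + log P_B(s|s') - Q(s,s')/α - E(s → s')/α`, while `V_Q(s') = α log F̃(s')`, so the
SQL residual with the corrected reward is exactly `-α` times it. Squaring and averaging over `π_b`
gives the factor `α²`.
-/

open Finset

section

variable {V : Type*} [Fintype V] (E : V → V → Prop) [DecidableRel E] (α : ℝ) (Q : V → V → ℝ)

theorem Fq_pos {s t : V} (hst : E s t) : 0 < Fq E α Q s :=
  sum_pos (fun _ _ => Real.exp_pos _) ⟨t, mem_filter.mpr ⟨mem_univ _, hst⟩⟩

theorem Fq_mul_PFq {s : V} (hs : 0 < Fq E α Q s) (s' : V) :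
    Fq E α Q s * PFq E α Q s s' = Real.exp (Q s s' / α) :=
  mul_div_cancel₀ _ hs.ne'

theorem deltaFLDB_eq {Ee PB : V → V → ℝ} {s s' : V} (hs : 0 < Fq E α Q s)
    (hs' : 0 < Fq E α Q s') (hPB : 0 < PB s s') :
    deltaFLDB E α Ee PB Q s s'
      = Real.log (Fq E α Q s') + Real.log (PB s s') - Q s s' / α - Ee s s' / α := by
  rw [deltaFLDB, Real.log_mul hs'.ne' hPB.ne', Fq_mul_PFq E α Q hs, Real.log_exp]

theorem sql_residual_eq_neg_mul_deltaFLDB [DecidableEq V] {sf : V} {Ee PB : V → V → ℝ}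
    (hα : α ≠ 0) {s s' t : V} (hss' : E s s') (hs't : E s' t) (hne : s' ≠ sf)
    (hPB : 0 < PB s s') :
    Q s s' - ((-Ee s s' + α * Real.log (PB s s')) + VQ E sf α Q s')
      = -α * deltaFLDB E α Ee PB Q s s' := by
  rw [deltaFLDB_eq E α Q (Fq_pos E α Q hss') (Fq_pos E α Q hs't) hPB, VQ, if_neg hne]
  field_simp
  ring

end

theorem sum_mul_sq_eq_sq_mul_sum_of_support {ι κ R : Type*} [CommSemiring R]
    (s : Finset ι) (t : Finset κ) {w f g : ι → κ → R} (c : R)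
    (h : ∀ i j, w i j ≠ 0 → f i j = c * g i j) :
    ∑ i ∈ s, ∑ j ∈ t, w i j * f i j ^ 2 = c ^ 2 * ∑ i ∈ s, ∑ j ∈ t, w i j * g i j ^ 2 := by
  simp only [mul_sum]
  refine sum_congr rfl fun i _ => sum_congr rfl fun j _ => ?_
  by_cases hw : w i j = 0
  · simp [hw]
  · rw [h i j hw]
    ring

theorem sql_loss_eq_fl_db_loss_general
    {V : Type*} [Fintype V] [DecidableEq V]
    (E : V → V → Prop) [DecidableRel E] (sf : V)
    (hchild : ∀ s : V, s ≠ sf → ∃ t : V, E s t)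
    (α : ℝ) (hα : 0 < α)
    (Ee : V → V → ℝ)
    (PB : V → V → ℝ)
    (hPBpos : ∀ s s' : V, E s s' → s' ≠ sf → 0 < PB s s')
    (r : V → V → ℝ)
    (hr : ∀ s s' : V, E s s' → s' ≠ sf →
      r s s' = -Ee s s' + α * Real.log (PB s s'))
    (Q : V → V → ℝ)
    -- π_b : a probability distribution over the edges s → s' with s' ∈ S
    (πb : V → V → ℝ)
    (hπb_supp : ∀ s s' : V, πb s s' ≠ 0 → E s s' ∧ s' ≠ sf) :
    (1 / 2) * (∑ s : V, ∑ s' : V, πb s s' * (Q s s' - (r s s' + VQ E sf α Q s')) ^ 2)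
      = α ^ 2 * ((1 / 2) *
          ∑ s : V, ∑ s' : V, πb s s' * (deltaFLDB E α Ee PB Q s s') ^ 2) := by
  have hresidual : ∀ s s', πb s s' ≠ 0 →
      Q s s' - (r s s' + VQ E sf α Q s') = -α * deltaFLDB E α Ee PB Q s s' := by
    intro s s' hπ
    obtain ⟨hss', hne⟩ := hπb_supp s s' hπ
    obtain ⟨t, hs't⟩ := hchild s' hne
    rw [hr s s' hss' hne]
    exact sql_residual_eq_neg_mul_deltaFLDB E α Q hα.ne' hss' hs't hne (hPBpos s s' hss' hne)
  rw [sum_mul_sq_eq_sq_mul_sum_of_support univ univ (-α) hresidual, neg_sq]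
  ring

/-- With the forward-looking corrected reward
`r(s,s') = -E(s → s') + α log P_B(s|s')` on edges with `s' ∈ S` and `r(s,s_f) = 0`, for any
probability distribution `π_b` over the edges `s → s'` with `s' ∈ S`, the Soft Q-Learning
objective is proportional to the Forward-Looking Detailed Balance objective:
`L_SQL = α² L_{FL-DB}`, under `F̃(s) = Σ_{s''} exp(Q(s,s'')/α)`,
`P_F(s'|s) = exp(Q(s,s')/α)/F̃(s)`. -/
theorem sql_loss_eq_fl_db_loss
    {V : Type*} [Fintype V] [DecidableEq V]
    (E : V → V → Prop) [DecidableRel E] (s0 sf : V)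
    (hacyc : ∀ v : V, ¬ Relation.TransGen E v v)
    (hsink : ∀ v : V, ¬ E sf v)
    (hreach : ∀ v : V, Relation.ReflTransGen E s0 v)
    (hchild : ∀ s : V, s ≠ sf → ∃ t : V, E s t)
    (α : ℝ) (hα : 0 < α)
    (En : V → ℝ)
    (Ee : V → V → ℝ)
    (hEe : ∀ (x : V) (l : List V), E x sf → IsPath E s0 x l → pairSum Ee l = En x)
    (PB : V → V → ℝ)
    (hPBpos : ∀ s s' : V, E s s' → s' ≠ sf → 0 < PB s s')
    (hPBsum : ∀ s' : V, s' ≠ sf → s' ≠ s0 →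
      ∑ s ∈ Finset.univ.filter (fun s => E s s'), PB s s' = 1)
    (r : V → V → ℝ)
    (hr : ∀ s s' : V, E s s' → s' ≠ sf →
      r s s' = -Ee s s' + α * Real.log (PB s s'))
    (hrf : ∀ x : V, E x sf → r x sf = 0)
    (Q : V → V → ℝ)
    -- π_b : a probability distribution over the edges s → s' with s' ∈ S
    (πb : V → V → ℝ)
    (hπb_nonneg : ∀ s s' : V, 0 ≤ πb s s')
    (hπb_supp : ∀ s s' : V, πb s s' ≠ 0 → E s s' ∧ s' ≠ sf)
    (hπb_sum : ∑ s : V, ∑ s' : V, πb s s' = 1) :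
    (1 / 2) * (∑ s : V, ∑ s' : V, πb s s' * (Q s s' - (r s s' + VQ E sf α Q s')) ^ 2)
      = α ^ 2 * ((1 / 2) *
          ∑ s : V, ∑ s' : V, πb s s' * (deltaFLDB E α Ee PB Q s s') ^ 2) :=
  sql_loss_eq_fl_db_loss_general E sf hchild α hα Ee PB hPBpos r hr Q πb hπb_supp
end
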